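/- Let N ≥ 2 be an integer and let x₀ lie in the interior of C_N^D. Then there exists a unique continuously differentiable function φ : [0,∞) → ℝ^N with φ(0) = x₀ such that φ(t) lies in the interior of C_N^D for every t ≥ 0 and φ solves the ODE of type D_N, i.e. φ_i'(t) = ∑_{j≠i} ( 1/(φ_i(t) − φ_j(t)) + 1/(φ_i(t) + φ_j(t)) ) for all i = 1,…,N and all t ≥ 0. -/

import Mathlib

open scoped BigOperators

noncomputable section

/-- The interior of the closed Weyl chamber of type D,
`C_N^D = {x : x_1 ≥ … ≥ x_{N-1} ≥ |x_N|}`: it consists of the `x` with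
`x_1 > x_2 > … > x_{N-1} > |x_N|`. -/
def interiorD {N : ℕ} (x : Fin N → ℝ) : Prop :=
  StrictAnti (fun j : Fin N => if (j : ℕ) = N - 1 then |x j| else x j)

/-- `φ` solves the ODE of type `D_N`,
`dx_i/dt = ∑_{j≠i} (1/(x_i - x_j) + 1/(x_i + x_j))`, on `[0,∞)`. -/
def solvesD {N : ℕ} (φ : ℝ → Fin N → ℝ) : Prop :=
  ∀ t ∈ Set.Ici (0:ℝ), ∀ i : Fin N,
    HasDerivWithinAt (fun s => φ s i)
      (∑ j ∈ Finset.univ.erase i,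
        (1 / (φ t i - φ t j) + 1 / (φ t i + φ t j)))
      (Set.Ici 0) t

/-!
The vector field is smooth on the open chamber `{x | ∀ i < j, |x j| < x i}`, hence locally
Lipschitz there: solutions staying in the chamber are unique, and they exist for a time that is
uniform over compact subsets of the chamber. Along a solution `∑ xᵢ²` grows at the constant rate
`2N(N-1)`, while `∑_{i≠j} (log (xᵢ - xⱼ) + log (xᵢ + xⱼ))` is nondecreasing: symmetrising in `i`
and `j`, its derivative is `2 ∑ vᵢ²`. On `[0, T]` the first fact confines the solution to a ball,
and then the second keeps every `xᵢ ± xⱼ` (`i < j`) above a positive constant. So the solution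
is trapped in a compact subset of the chamber and can be continued in steps of uniform length.
-/

open Set Metric

section IntegralCurves

variable {E : Type*} [NormedAddCommGroup E] [NormedSpace ℝ E]

theorem monotoneOn_Icc_of_hasDerivWithinAt_nonneg {f f' : ℝ → ℝ} {a b : ℝ}
    (hf : ∀ t ∈ Icc a b, HasDerivWithinAt f (f' t) (Icc a b) t) (hf' : ∀ t ∈ Icc a b, 0 ≤ f' t) :
    MonotoneOn f (Icc a b) :=
  monotoneOn_of_hasDerivWithinAt_nonneg (convex_Icc a b)
    (fun t ht => (hf t ht).continuousWithinAt)
    (fun t ht => (hf t (interior_subset ht)).mono interior_subset)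
    (fun t ht => hf' t (interior_subset ht))

theorem IsIntegralCurveOn.piecewise_Icc {γ₁ γ₂ : ℝ → E} {v : ℝ → E → E} {a b c : ℝ}
    (h₁ : IsIntegralCurveOn γ₁ v (Icc a b)) (h₂ : IsIntegralCurveOn γ₂ v (Icc b c))
    (hb : γ₁ b = γ₂ b) :
    IsIntegralCurveOn (fun t => if t ≤ b then γ₁ t else γ₂ t) v (Icc a b ∪ Icc b c) := by
  set γ := fun t => if t ≤ b then γ₁ t else γ₂ t
  have hγ₁ : EqOn γ γ₁ (Icc a b) := fun t ht => if_pos ht.2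
  have hγ₂ : EqOn γ γ₂ (Icc b c) := fun t ht => by
    rcases ht.1.eq_or_lt with rfl | hbt
    · exact (if_pos le_rfl).trans hb
    · exact if_neg hbt.not_ge
  -- At a time outside one of the two closed pieces, the derivative within that piece is vacuous.
  have piece : ∀ {s : Set ℝ} {γ' : ℝ → E}, IsClosed s → IsIntegralCurveOn γ' v s → EqOn γ γ' s →
      ∀ t, HasDerivWithinAt γ (v t (γ t)) s t := by
    intro s γ' hs h hγ t
    by_cases ht : t ∈ s
    · rw [hγ ht]; exact (h t ht).congr hγ (hγ ht)
    · exact HasFDerivWithinAt.of_notMem_closure (hs.closure_eq.symm ▸ ht)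
  exact fun t _ => (piece isClosed_Icc h₁ hγ₁ t).union (piece isClosed_Icc h₂ hγ₂ t)

theorem IsIntegralCurveOn.mapsTo_closedBall {γ : ℝ → E} {f : E → E} {x : E} {t₀ ε ρ C : ℝ}
    (hγ : IsIntegralCurveOn γ (fun _ => f) (Icc t₀ (t₀ + ε))) (h₀ : γ t₀ = x) (hC₀ : 0 ≤ C)
    (hC : ∀ y ∈ closedBall x ρ, ‖f y‖ < C) (hCε : C * ε ≤ ρ) :
    MapsTo γ (Icc t₀ (t₀ + ε)) (closedBall x ρ) := by
  have hderiv : ∀ t ∈ Ico t₀ (t₀ + ε), HasDerivWithinAt (fun t => γ t - x) (f (γ t)) (Ici t) t :=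
    fun t ht => ((hγ t (Ico_subset_Icc_self ht)).mono_of_mem_nhdsWithin
      (Icc_mem_nhdsGE_of_mem ht)).sub_const x
  intro t ht
  rw [mem_closedBall, dist_eq_norm]
  refine (image_norm_le_of_norm_deriv_right_lt_deriv_boundary' (f := fun t => γ t - x)
    (B := fun t => C * (t - t₀))
    (hγ.continuousOn.sub continuousOn_const) hderiv (by simp [h₀]) (by fun_prop)
    (fun t _ => ((hasDerivAt_id t).sub_const t₀ |>.const_mul C).hasDerivWithinAt)
    (fun τ hτ hτx => ?_) ht).trans ?_
  · simpa using hC _ (by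
      rw [mem_closedBall, dist_eq_norm, hτx]
      exact (mul_le_mul_of_nonneg_left (by linarith [hτ.2]) hC₀).trans hCε)
  · exact (mul_le_mul_of_nonneg_left (by linarith [ht.2]) hC₀).trans hCε

theorem IsIntegralCurveOn.eqOn_Icc {f : E → E} {U : Set E} (hf : LocallyLipschitzOn U f)
    {γ₁ γ₂ : ℝ → E} {a b : ℝ} (h₁ : IsIntegralCurveOn γ₁ (fun _ => f) (Icc a b))
    (h₂ : IsIntegralCurveOn γ₂ (fun _ => f) (Icc a b)) (hU₁ : MapsTo γ₁ (Icc a b) U)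
    (hU₂ : MapsTo γ₂ (Icc a b) U) (ha : γ₁ a = γ₂ a) : EqOn γ₁ γ₂ (Icc a b) := by
  set K := γ₁ '' Icc a b ∪ γ₂ '' Icc a b
  have hK : IsCompact K := (isCompact_Icc.image_of_continuousOn h₁.continuousOn).union
    (isCompact_Icc.image_of_continuousOn h₂.continuousOn)
  obtain ⟨L, hL⟩ := (hf.mono (union_subset hU₁.image_subset hU₂.image_subset))
    |>.exists_lipschitzOnWith_of_compact hK
  have right_deriv : ∀ {γ}, IsIntegralCurveOn γ (fun _ => f) (Icc a b) →
      ∀ t ∈ Ico a b, HasDerivWithinAt γ (f (γ t)) (Ici t) t :=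
    fun h t ht => (h t (Ico_subset_Icc_self ht)).mono_of_mem_nhdsWithin (Icc_mem_nhdsGE_of_mem ht)
  exact ODE_solution_unique_of_mem_Icc_right (s := fun _ => K) (fun _ _ => hL)
    h₁.continuousOn (right_deriv h₁) (fun _ ht => .inl ⟨_, Ico_subset_Icc_self ht, rfl⟩)
    h₂.continuousOn (right_deriv h₂) (fun _ ht => .inr ⟨_, Ico_subset_Icc_self ht, rfl⟩)
    ha

theorem exists_isIntegralCurveOn_Ici {f : E → E} {U : Set E} (hf : LocallyLipschitzOn U f)
    {x₀ : E} (hex : ∀ T ≥ (0 : ℝ), ∃ γ : ℝ → E, γ 0 = x₀ ∧ MapsTo γ (Icc 0 T) U ∧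
      IsIntegralCurveOn γ (fun _ => f) (Icc 0 T)) :
    ∃ γ : ℝ → E, γ 0 = x₀ ∧ MapsTo γ (Ici 0) U ∧ IsIntegralCurveOn γ (fun _ => f) (Ici 0) := by
  choose g hg₀ hgU hg using fun n : ℕ => hex n n.cast_nonneg
  have hagree : ∀ {m n : ℕ}, m ≤ n → EqOn (g m) (g n) (Icc 0 m) := fun {m n} hmn => by
    have hsub : Icc (0 : ℝ) m ⊆ Icc 0 n := Icc_subset_Icc_right (by exact_mod_cast hmn)
    exact (hg m).eqOn_Icc hf ((hg n).mono hsub) (hgU m) ((hgU n).mono_left hsub)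
      ((hg₀ m).trans (hg₀ n).symm)
  set γ : ℝ → E := fun t => g ⌈t⌉₊ t
  have hγ : ∀ n : ℕ, EqOn γ (g n) (Icc 0 n) := fun n t ht =>
    hagree (Nat.ceil_le.2 ht.2) ⟨ht.1, Nat.le_ceil t⟩
  refine ⟨γ, (hγ 0 (by simp)).trans (hg₀ 0), fun t ht => ?_, fun t ht => ?_⟩
  · rw [hγ _ ⟨ht, Nat.le_ceil t⟩]; exact hgU _ ⟨ht, Nat.le_ceil t⟩
  · have ht' : t ∈ Icc (0 : ℝ) (⌈t⌉₊ + 1 : ℕ) := ⟨ht, by push_cast; linarith [Nat.le_ceil t]⟩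
    rw [hγ _ ht']
    refine ((hg _ t ht').congr (hγ _) (hγ _ ht')).mono_of_mem_nhdsWithin ?_
    exact inter_mem_nhdsWithin (Ici 0) (Iic_mem_nhds (by push_cast; linarith [Nat.le_ceil t]))

variable [ProperSpace E]

theorem IsCompact.exists_forall_exists_isIntegralCurveOn_Icc {f : E → E} {U K : Set E}
    (hU : IsOpen U) (hf : LocallyLipschitzOn U f) (hK : IsCompact K) (hKU : K ⊆ U) :
    ∃ ε > 0, ∀ x ∈ K, ∀ t₀ : ℝ, ∃ γ : ℝ → E, γ t₀ = x ∧ MapsTo γ (Icc t₀ (t₀ + ε)) U ∧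
      IsIntegralCurveOn γ (fun _ => f) (Icc t₀ (t₀ + ε)) := by
  obtain ⟨δ, hδ, hδU⟩ := hK.exists_cthickening_subset_open hU hKU
  have hK' : IsCompact (cthickening δ K) := hK.cthickening
  obtain ⟨L, hL⟩ := (hf.mono hδU).exists_lipschitzOnWith_of_compact hK'
  obtain ⟨C, hC⟩ := hK'.exists_bound_of_continuousOn (hf.continuousOn.mono hδU)
  set C' := C.toNNReal
  have hC' : ∀ y ∈ cthickening δ K, ‖f y‖ ≤ C' := fun y hy => (hC y hy).trans C.le_coe_toNNReal
  refine ⟨δ / (C' + 1), by positivity, fun x hx t₀ => ?_⟩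
  have hball : closedBall x δ ⊆ cthickening δ K := closedBall_subset_cthickening hx δ
  have hPL : IsPicardLindelof (fun _ => f) (tmin := t₀) (tmax := t₀ + δ / (C' + 1))
      ⟨t₀, le_rfl, by simp only [le_add_iff_nonneg_right]; positivity⟩ x ⟨δ, hδ.le⟩ 0 C' L := by
    refine .of_time_independent (fun y hy => hC' y (hball hy)) (hL.mono hball) ?_
    show (C' : ℝ) * max (t₀ + δ / (C' + 1) - t₀) (t₀ - t₀) ≤ δ - 0
    rw [add_sub_cancel_left, sub_self, max_eq_left (by positivity), sub_zero, mul_div_assoc']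
    exact div_le_of_le_mul₀ (by positivity) hδ.le (by nlinarith)
  obtain ⟨γ, hγ₀, hγ⟩ := hPL.exists_eq_forall_mem_Icc_hasDerivWithinAt₀
  refine ⟨γ, hγ₀, ?_, hγ⟩
  have hγ' : IsIntegralCurveOn γ (fun _ => f) (Icc t₀ (t₀ + δ / (C' + 1))) := hγ
  refine (hγ'.mapsTo_closedBall hγ₀ (by positivity)
    (fun y hy => (hC' y (hball hy)).trans_lt (lt_add_one _)) ?_).mono_right (hball.trans hδU)
  rw [mul_div_cancel₀ _ (by positivity)]

theorem exists_isIntegralCurveOn_Icc_of_forall_mem_compact {f : E → E} {U K : Set E}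
    (hU : IsOpen U) (hf : LocallyLipschitzOn U f) (hK : IsCompact K) (hKU : K ⊆ U) {x₀ : E}
    (hx₀ : x₀ ∈ K) {T : ℝ} (hT : 0 ≤ T)
    (htrap : ∀ s ∈ Icc 0 T, ∀ γ : ℝ → E, γ 0 = x₀ → MapsTo γ (Icc 0 s) U →
      IsIntegralCurveOn γ (fun _ => f) (Icc 0 s) → γ s ∈ K) :
    ∃ γ : ℝ → E, γ 0 = x₀ ∧ MapsTo γ (Icc 0 T) U ∧ IsIntegralCurveOn γ (fun _ => f) (Icc 0 T) := by
  obtain ⟨ε, hε, hloc⟩ := hK.exists_forall_exists_isIntegralCurveOn_Icc hU hf hKU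
  have hstep : ∀ n : ℕ, ∃ γ : ℝ → E, γ 0 = x₀ ∧ MapsTo γ (Icc 0 (min (n * ε) T)) U ∧
      IsIntegralCurveOn γ (fun _ => f) (Icc 0 (min (n * ε) T)) := by
    intro n
    induction n with
    | zero =>
      obtain ⟨γ, hγ₀, hγU, hγ⟩ := hloc x₀ hx₀ 0
      have hsub : Icc 0 (min ((0 : ℕ) * ε) T) ⊆ Icc 0 (0 + ε) :=
        Icc_subset_Icc_right (by simp [hT, hε.le])
      exact ⟨γ, hγ₀, hγU.mono_left hsub, hγ.mono hsub⟩
    | succ n ih =>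
      obtain ⟨γ, hγ₀, hγU, hγ⟩ := ih
      set s := min (n * ε) T
      have hs : s ∈ Icc 0 T := ⟨le_min (by positivity) hT, min_le_right _ _⟩
      obtain ⟨β, hβ₀, hβU, hβ⟩ := hloc (γ s) (htrap s hs γ hγ₀ hγU hγ) s
      have hsub : Icc 0 (min ((n + 1 : ℕ) * ε) T) ⊆ Icc 0 s ∪ Icc s (s + ε) := by
        rw [Icc_union_Icc_eq_Icc hs.1 (by linarith)]
        refine Icc_subset_Icc_right ?_
        rw [← min_add_add_right]
        exact min_le_min (by push_cast; linarith) (by linarith)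
      refine ⟨fun t => if t ≤ s then γ t else β t, by simp [hs.1, hγ₀], ?_,
        (hγ.piecewise_Icc hβ hβ₀.symm).mono hsub⟩
      intro t ht
      by_cases hts : t ≤ s
      · simpa [hts] using hγU ⟨ht.1, hts⟩
      · simpa [hts] using hβU ⟨(not_le.1 hts).le, ((hsub ht).resolve_left (fun h => hts h.2)).2⟩
  obtain ⟨n, hn⟩ := exists_nat_ge (T / ε)
  have hmin : min (n * ε) T = T := min_eq_right ((div_le_iff₀ hε).1 hn)
  simpa only [hmin] using hstep n

end IntegralCurves

namespace TypeD

variable {N : ℕ}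

def openChamber (N : ℕ) : Set (Fin N → ℝ) :=
  {x | ∀ i j : Fin N, i < j → |x j| < x i}

def field (N : ℕ) (x : Fin N → ℝ) (i : Fin N) : ℝ :=
  ∑ j ∈ Finset.univ.erase i, (1 / (x i - x j) + 1 / (x i + x j))

/-- Since `Real.log` is even, this is `2 * log |∏_{i<j} (x i ^ 2 - x j ^ 2)|`. -/
def logVandermonde (N : ℕ) (x : Fin N → ℝ) : ℝ :=
  ∑ i, ∑ j ∈ Finset.univ.erase i, (Real.log (x i - x j) + Real.log (x i + x j))

theorem isOpen_openChamber : IsOpen (openChamber N) := by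
  simp only [openChamber, ofPred_forall]
  exact isOpen_iInter_of_finite fun i => isOpen_iInter_of_finite fun j =>
    isOpen_iInter_of_finite fun _ => isOpen_lt (continuous_apply j).abs (continuous_apply i)

theorem sub_ne_zero_and_add_ne_zero_of_mem_openChamber {x : Fin N → ℝ} (hx : x ∈ openChamber N)
    {i j : Fin N} (hij : i ≠ j) : x i - x j ≠ 0 ∧ x i + x j ≠ 0 := by
  rcases hij.lt_or_gt with hij | hij
  · obtain ⟨h₁, h₂⟩ := abs_lt.1 (hx i j hij)
    constructor <;> linarith
  · obtain ⟨h₁, h₂⟩ := abs_lt.1 (hx j i hij)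
    constructor <;> linarith

theorem interiorD_iff_mem_openChamber {x : Fin N → ℝ} : interiorD x ↔ x ∈ openChamber N := by
  have not_last : ∀ {i j : Fin N}, i < j → (i : ℕ) ≠ N - 1 := fun {i j} hij => by
    have := j.isLt; rw [Fin.lt_def] at hij; omega
  constructor
  · intro h i j hij
    have hji := h hij
    simp only [if_neg (not_last hij)] at hji
    split_ifs at hji with hj
    · exact hji
    · have hj' : (j : ℕ) < N - 1 := by have := j.isLt; omega
      have hlast := h (show j < ⟨N - 1, by omega⟩ from hj')
      simp only [if_neg hj] at hlast
      rwa [abs_of_pos ((abs_nonneg _).trans_lt hlast)]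
  · intro h i j hij
    simp only [if_neg (not_last hij)]
    refine lt_of_le_of_lt ?_ (h i j hij)
    split_ifs
    exacts [le_rfl, le_abs_self _]

theorem contDiffAt_field {x : Fin N → ℝ} (hx : x ∈ openChamber N) : ContDiffAt ℝ 1 (field N) x := by
  refine contDiffAt_pi.2 fun i => ContDiffAt.sum fun j hj => ?_
  obtain ⟨hsub, hadd⟩ :=
    sub_ne_zero_and_add_ne_zero_of_mem_openChamber hx (Finset.ne_of_mem_erase hj).symm
  have hi : ContDiffAt ℝ 1 (fun y : Fin N → ℝ => y i) x := (contDiff_apply ℝ ℝ i).contDiffAt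
  have hj : ContDiffAt ℝ 1 (fun y : Fin N → ℝ => y j) x := (contDiff_apply ℝ ℝ j).contDiffAt
  simp only [one_div]
  exact ((hi.sub hj).inv hsub).add ((hi.add hj).inv hadd)

theorem locallyLipschitzOn_field : LocallyLipschitzOn (openChamber N) (field N) := fun _ hx =>
  let ⟨K, t, ht, hK⟩ := (contDiffAt_field hx).exists_lipschitzOnWith
  ⟨K, t, mem_nhdsWithin_of_mem_nhds ht, hK⟩

theorem sum_sum_erase_comm (g : Fin N → Fin N → ℝ) :
    ∑ i, ∑ j ∈ Finset.univ.erase i, g i j = ∑ i, ∑ j ∈ Finset.univ.erase i, g j i :=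
  Finset.sum_comm' fun i j => by simp only [Finset.mem_erase, Finset.mem_univ, and_true]; tauto

theorem sum_sum_erase_div_add_div (x w : Fin N → ℝ) :
    ∑ i, ∑ j ∈ Finset.univ.erase i, ((w i - w j) / (x i - x j) + (w i + w j) / (x i + x j)) =
      2 * ∑ i, w i * field N x i := by
  set A := fun i j => w i / (x i - x j) + w i / (x i + x j)
  set B := fun i j => -w j / (x i - x j) + w j / (x i + x j)
  have hAB : ∀ i j, (w i - w j) / (x i - x j) + (w i + w j) / (x i + x j) = A i j + B i j :=
    fun i j => by ring
  have hBA : ∀ i j, B j i = A i j := fun i j => by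
    simp only [A, B]; rw [← neg_sub, neg_div_neg_eq, add_comm (x j)]
  calc _ = ∑ i, ∑ j ∈ Finset.univ.erase i, A i j + ∑ i, ∑ j ∈ Finset.univ.erase i, B i j := by
        simp only [hAB, Finset.sum_add_distrib]
    _ = 2 * ∑ i, ∑ j ∈ Finset.univ.erase i, A i j := by
        rw [sum_sum_erase_comm B]; simp only [hBA]; ring
    _ = 2 * ∑ i, w i * field N x i := by
        simp only [A, field, Finset.mul_sum, mul_add, mul_one_div]

theorem sum_mul_field {x : Fin N → ℝ} (hx : x ∈ openChamber N) :
    ∑ i, x i * field N x i = (N * (N - 1) : ℕ) := by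
  have h := sum_sum_erase_div_add_div x x
  have hpair : ∀ i, ∀ j ∈ Finset.univ.erase i,
      (x i - x j) / (x i - x j) + (x i + x j) / (x i + x j) = 2 := fun i j hj => by
    obtain ⟨hsub, hadd⟩ :=
      sub_ne_zero_and_add_ne_zero_of_mem_openChamber hx (Finset.ne_of_mem_erase hj).symm
    rw [div_self hsub, div_self hadd]; norm_num
  rw [Finset.sum_congr rfl fun i _ => Finset.sum_congr rfl (hpair i)] at h
  simp only [Finset.sum_const, Finset.card_erase_of_mem (Finset.mem_univ _), Finset.card_univ,
    Fintype.card_fin, nsmul_eq_mul] at h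
  push_cast
  linarith

theorem hasDerivWithinAt_sum_sq {γ : ℝ → Fin N → ℝ} {s : Set ℝ} {t : ℝ}
    (hγ : HasDerivWithinAt γ (field N (γ t)) s t) (ht : γ t ∈ openChamber N) :
    HasDerivWithinAt (fun τ => ∑ i, γ τ i ^ 2) (2 * (N * (N - 1) : ℕ)) s t := by
  have := HasDerivWithinAt.fun_sum (u := Finset.univ)
    fun i _ => (hasDerivWithinAt_pi.1 hγ i).fun_pow 2
  refine this.congr_deriv ?_
  rw [← sum_mul_field ht, Finset.mul_sum]
  exact Finset.sum_congr rfl fun i _ => by norm_num; ring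

theorem hasDerivWithinAt_logVandermonde {γ : ℝ → Fin N → ℝ} {s : Set ℝ} {t : ℝ}
    (hγ : HasDerivWithinAt γ (field N (γ t)) s t) (ht : γ t ∈ openChamber N) :
    HasDerivWithinAt (fun τ => logVandermonde N (γ τ))
      (2 * ∑ i, field N (γ t) i * field N (γ t) i) s t := by
  rw [← sum_sum_erase_div_add_div]
  refine HasDerivWithinAt.fun_sum fun i _ => HasDerivWithinAt.fun_sum fun j hj => ?_
  obtain ⟨hsub, hadd⟩ :=
    sub_ne_zero_and_add_ne_zero_of_mem_openChamber ht (Finset.ne_of_mem_erase hj).symm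
  have hi := hasDerivWithinAt_pi.1 hγ i
  have hj := hasDerivWithinAt_pi.1 hγ j
  exact ((hi.sub hj).log hsub).add ((hi.add hj).log hadd)

theorem sum_sq_le_of_isIntegralCurveOn {γ : ℝ → Fin N → ℝ} {s : ℝ}
    (hγ : IsIntegralCurveOn γ (fun _ => field N) (Icc 0 s))
    (hU : MapsTo γ (Icc 0 s) (openChamber N)) {t : ℝ} (ht : t ∈ Icc 0 s) :
    ∑ i, γ t i ^ 2 ≤ ∑ i, γ 0 i ^ 2 + 2 * (N * (N - 1) : ℕ) * t := by
  have hmono := monotoneOn_Icc_of_hasDerivWithinAt_nonneg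
    (f := fun τ => 2 * (N * (N - 1) : ℕ) * τ - ∑ i, γ τ i ^ 2)
    (fun τ hτ => ((hasDerivWithinAt_id τ _).const_mul _).sub
      (hasDerivWithinAt_sum_sq (hγ τ hτ) (hU hτ))) (fun _ _ => by simp)
  have := hmono ⟨le_rfl, ht.1.trans ht.2⟩ ht ht.1
  simp only [mul_zero, zero_sub] at this
  linarith

theorem logVandermonde_le_of_isIntegralCurveOn {γ : ℝ → Fin N → ℝ} {s : ℝ}
    (hγ : IsIntegralCurveOn γ (fun _ => field N) (Icc 0 s))
    (hU : MapsTo γ (Icc 0 s) (openChamber N)) {t : ℝ} (ht : t ∈ Icc 0 s) :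
    logVandermonde N (γ 0) ≤ logVandermonde N (γ t) :=
  monotoneOn_Icc_of_hasDerivWithinAt_nonneg
    (fun τ hτ => hasDerivWithinAt_logVandermonde (hγ τ hτ) (hU hτ))
    (fun _ _ => mul_nonneg zero_le_two (Finset.sum_nonneg fun _ _ => mul_self_nonneg _))
    ⟨le_rfl, ht.1.trans ht.2⟩ ht ht.1

theorem log_sub_le_and_log_add_le_two_mul_norm (x : Fin N → ℝ) (i j : Fin N) :
    Real.log (x i - x j) ≤ 2 * ‖x‖ ∧ Real.log (x i + x j) ≤ 2 * ‖x‖ := by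
  have hi := norm_le_pi_norm x i
  have hj := norm_le_pi_norm x j
  rw [Real.norm_eq_abs] at hi hj
  rw [← Real.log_abs (x i - x j), ← Real.log_abs (x i + x j)]
  exact ⟨(Real.log_le_self (abs_nonneg _)).trans (by linarith [abs_sub (x i) (x j)]),
    (Real.log_le_self (abs_nonneg _)).trans (by linarith [abs_add_le (x i) (x j)])⟩

theorem le_log_of_le_logVandermonde {x : Fin N → ℝ} {c L : ℝ}
    (hc : ∀ i j, Real.log (x i - x j) ≤ c ∧ Real.log (x i + x j) ≤ c)
    (hL : L ≤ logVandermonde N x) {i j : Fin N} (hij : i ≠ j) :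
    L - (2 * (N * (N - 1) : ℕ) - 1) * c ≤ Real.log (x i - x j) ∧
      L - (2 * (N * (N - 1) : ℕ) - 1) * c ≤ Real.log (x i + x j) := by
  set A := fun i j => Real.log (x i - x j) + Real.log (x i + x j)
  have hA : ∀ i j, 0 ≤ 2 * c - A i j := fun i j => by linarith [hc i j]
  -- Each summand of the double sum below is nonnegative, hence bounded by the total.
  have hsingle : 2 * c - A i j ≤ ∑ i, ∑ j ∈ Finset.univ.erase i, (2 * c - A i j) :=
    (Finset.single_le_sum (fun j _ => hA i j)
      (Finset.mem_erase.2 ⟨hij.symm, Finset.mem_univ j⟩)).trans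
      (Finset.single_le_sum (f := fun i => ∑ j ∈ Finset.univ.erase i, (2 * c - A i j))
        (fun i _ => Finset.sum_nonneg fun j _ => hA i j) (Finset.mem_univ i))
  have htotal : ∑ i, ∑ j ∈ Finset.univ.erase i, (2 * c - A i j) =
      2 * (N * (N - 1) : ℕ) * c - logVandermonde N x := by
    simp only [Finset.sum_sub_distrib, Finset.sum_const, Finset.card_univ, Fintype.card_fin,
      Finset.card_erase_of_mem (Finset.mem_univ _), nsmul_eq_mul, logVandermonde, A]
    push_cast
    ring
  constructor <;> linarith [hc i j]

def truncatedChamber (N : ℕ) (r δ : ℝ) : Set (Fin N → ℝ) :=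
  closedBall 0 r ∩ {x | ∀ i j : Fin N, i < j → δ ≤ x i - x j ∧ δ ≤ x i + x j}

theorem isCompact_truncatedChamber (r δ : ℝ) : IsCompact (truncatedChamber N r δ) := by
  refine (isCompact_closedBall 0 r).inter_right ?_
  simp only [ofPred_forall, ofPred_and]
  exact isClosed_iInter fun i => isClosed_iInter fun j => isClosed_iInter fun _ =>
    (isClosed_le (by fun_prop) (by fun_prop)).inter (isClosed_le (by fun_prop) (by fun_prop))

theorem truncatedChamber_subset_openChamber {r δ : ℝ} (hδ : 0 < δ) :
    truncatedChamber N r δ ⊆ openChamber N := fun x hx i j hij => by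
  obtain ⟨hsub, hadd⟩ := hx.2 i j hij
  exact abs_lt.2 ⟨by linarith, by linarith⟩

theorem mem_truncatedChamber_of_le_logVandermonde {x : Fin N → ℝ} (hx : x ∈ openChamber N)
    {r L : ℝ} (hr : ‖x‖ ≤ r) (hL : L ≤ logVandermonde N x) :
    x ∈ truncatedChamber N r (Real.exp (L - (2 * (N * (N - 1) : ℕ) - 1) * (2 * r))) := by
  refine ⟨mem_closedBall_zero_iff.2 hr, fun i j hij => ?_⟩
  have hc : ∀ i j, Real.log (x i - x j) ≤ 2 * r ∧ Real.log (x i + x j) ≤ 2 * r := fun i j =>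
    (log_sub_le_and_log_add_le_two_mul_norm x i j).imp (·.trans (by linarith))
      (·.trans (by linarith))
  obtain ⟨hlog_sub, hlog_add⟩ := le_log_of_le_logVandermonde hc hL hij.ne
  obtain ⟨hsub, hadd⟩ := abs_lt.1 (hx i j hij)
  exact ⟨(Real.le_log_iff_exp_le (by linarith)).1 hlog_sub,
    (Real.le_log_iff_exp_le (by linarith)).1 hlog_add⟩

theorem exists_isIntegralCurveOn_Icc_field {x₀ : Fin N → ℝ} (hx₀ : x₀ ∈ openChamber N) {T : ℝ}
    (hT : 0 ≤ T) : ∃ γ : ℝ → Fin N → ℝ, γ 0 = x₀ ∧ MapsTo γ (Icc 0 T) (openChamber N) ∧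
      IsIntegralCurveOn γ (fun _ => field N) (Icc 0 T) := by
  set R := ∑ i, x₀ i ^ 2 + 2 * (N * (N - 1) : ℕ) * T
  set L := logVandermonde N x₀
  have hnorm : ∀ x : Fin N → ℝ, ∑ i, x i ^ 2 ≤ R → ‖x‖ ≤ √R := fun x hx =>
    (pi_norm_le_iff_of_nonneg (Real.sqrt_nonneg R)).2 fun i => Real.abs_le_sqrt <|
      (Finset.single_le_sum (fun j _ => sq_nonneg (x j)) (Finset.mem_univ i)).trans hx
  have hmem : ∀ x ∈ openChamber N, ∑ i, x i ^ 2 ≤ R → L ≤ logVandermonde N x →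
      x ∈ truncatedChamber N √R (Real.exp (L - (2 * (N * (N - 1) : ℕ) - 1) * (2 * √R))) :=
    fun x hx hR hL => mem_truncatedChamber_of_le_logVandermonde hx (hnorm x hR) hL
  refine exists_isIntegralCurveOn_Icc_of_forall_mem_compact isOpen_openChamber
    locallyLipschitzOn_field (isCompact_truncatedChamber _ _)
    (truncatedChamber_subset_openChamber (Real.exp_pos _))
    (hmem x₀ hx₀ (le_add_of_nonneg_right (by positivity)) le_rfl) hT
    fun s hs γ hγ₀ hU hγ => hmem _ (hU ⟨hs.1, le_rfl⟩) ?_ ?_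
  · refine (sum_sq_le_of_isIntegralCurveOn hγ hU ⟨hs.1, le_rfl⟩).trans ?_
    rw [hγ₀]
    have : 0 ≤ 2 * ((N * (N - 1) : ℕ) : ℝ) := by positivity
    exact add_le_add_right (mul_le_mul_of_nonneg_left hs.2 this) _
  · have := logVandermonde_le_of_isIntegralCurveOn hγ hU ⟨hs.1, le_rfl⟩
    rwa [hγ₀] at this

theorem solvesD_iff_isIntegralCurveOn {φ : ℝ → Fin N → ℝ} :
    solvesD φ ↔ IsIntegralCurveOn φ (fun _ => field N) (Ici 0) :=
  forall₂_congr fun _ _ => hasDerivWithinAt_pi.symm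

end TypeD

open TypeD

theorem statement13_general (N : ℕ) (x₀ : Fin N → ℝ) (hx₀ : interiorD x₀) :
    ∃ φ : ℝ → Fin N → ℝ,
      (φ 0 = x₀ ∧ (∀ t ∈ Set.Ici (0:ℝ), interiorD (φ t)) ∧ solvesD φ) ∧
      (∀ ψ : ℝ → Fin N → ℝ,
        (ψ 0 = x₀ ∧ (∀ t ∈ Set.Ici (0:ℝ), interiorD (ψ t)) ∧ solvesD ψ) →
        ∀ t ∈ Set.Ici (0:ℝ), ψ t = φ t) := by
  simp only [interiorD_iff_mem_openChamber, solvesD_iff_isIntegralCurveOn] at hx₀ ⊢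
  obtain ⟨φ, hφ₀, hφU, hφ⟩ := exists_isIntegralCurveOn_Ici locallyLipschitzOn_field
    fun T hT => exists_isIntegralCurveOn_Icc_field hx₀ hT
  refine ⟨φ, ⟨hφ₀, hφU, hφ⟩, fun ψ ⟨hψ₀, hψU, hψ⟩ t ht => ?_⟩
  exact (hψ.mono Icc_subset_Ici_self).eqOn_Icc locallyLipschitzOn_field
    (hφ.mono Icc_subset_Ici_self) (fun τ hτ => hψU τ hτ.1) (fun τ hτ => hφU hτ.1)
    (hψ₀.trans hφ₀.symm) ⟨ht, le_rfl⟩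

/-- Existence and uniqueness of the solution of the ODE of type `D_N`
starting at a point in the interior of the Weyl chamber, staying in the
interior for all times `t ≥ 0`. -/
theorem statement13 (N : ℕ) (hN : 2 ≤ N) (x₀ : Fin N → ℝ) (hx₀ : interiorD x₀) :
    ∃ φ : ℝ → Fin N → ℝ,
      (φ 0 = x₀ ∧ (∀ t ∈ Set.Ici (0:ℝ), interiorD (φ t)) ∧ solvesD φ) ∧
      (∀ ψ : ℝ → Fin N → ℝ,
        (ψ 0 = x₀ ∧ (∀ t ∈ Set.Ici (0:ℝ), interiorD (ψ t)) ∧ solvesD ψ) →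
        ∀ t ∈ Set.Ici (0:ℝ), ψ t = φ t) :=
  statement13_general N x₀ hx₀

end
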